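/- arXiv:2404.11060 — 2 statements merged into one kernel-verified Lean document; each statement's English description precedes it below -/
import Mathlib

section
/- Let G be a finite, connected, S_{2,5}-free simple graph with minimum degree at least 3, and suppose G has a vertex v of degree 7. Then the vertex set of G equals the closed neighborhood N[v] of v; in particular G has exactly 8 vertices. -/
/-!
If some vertex lies outside `N[v]`, connectivity gives an edge `u w` with `u ∈ N(v)` and
`w ∉ N[v]`. As `deg u ≥ 3`, `u` has a further neighbour `x ∉ {v, w}`, and `v` keeps
`7 - 2 = 5` neighbours outside `{u, x}`, none of them equal to `w`. With backbone `u v`,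
leaves `w, x` at `u` and these five at `v`, this is an `S_{2,5}`.
-/

/-- `G` contains the double star `S_{2,5}` as a subgraph: there is a backbone edge `u v`,
two further neighbors of `u` and five further neighbors of `v`, all nine vertices distinct. -/
def ContainsS25 {V : Type*} (G : SimpleGraph V) : Prop :=
  ∃ u v a₁ a₂ b₁ b₂ b₃ b₄ b₅ : V,
    ([u, v, a₁, a₂, b₁, b₂, b₃, b₄, b₅] : List V).Nodup ∧
    G.Adj u v ∧ G.Adj u a₁ ∧ G.Adj u a₂ ∧
    G.Adj v b₁ ∧ G.Adj v b₂ ∧ G.Adj v b₃ ∧ G.Adj v b₄ ∧ G.Adj v b₅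

open Finset

theorem List.exists_sublist_of_five_le_length {α : Type*} {l : List α} (h : 5 ≤ l.length) :
    ∃ b₁ b₂ b₃ b₄ b₅, [b₁, b₂, b₃, b₄, b₅].Sublist l := by
  match l, h with
  | b₁ :: b₂ :: b₃ :: b₄ :: b₅ :: l, _ =>
    exact ⟨b₁, b₂, b₃, b₄, b₅, by simp⟩

namespace SimpleGraph

variable {V : Type*} {G : SimpleGraph V}

theorem Connected.eq_univ_of_adj_mem [Fintype V] (hG : G.Connected) {s : Finset V}
    {v : V} (hv : v ∈ s) (hs : ∀ ⦃u w⦄, u ∈ s → G.Adj u w → w ∈ s) : s = univ := by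
  refine eq_univ_of_forall fun z => by_contra fun hz => ?_
  obtain ⟨d, -, hd, hd'⟩ := (hG v z).some.exists_boundary_dart (s : Set V) hv hz
  exact hd' (hs hd d.adj)

theorem containsS25_of_adj [DecidableEq V] [Fintype V] [DecidableRel G.Adj] {u v a₁ a₂ : V}
    (huv : G.Adj u v) (ha₁ : G.Adj u a₁) (ha₂ : G.Adj u a₂) (ha : a₁ ≠ a₂) (hva₁ : v ≠ a₁)
    (hva₂ : v ≠ a₂) (h5 : 5 ≤ #(G.neighborFinset v \ {u, a₁, a₂})) : ContainsS25 G := by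
  set s := G.neighborFinset v \ {u, a₁, a₂}
  obtain ⟨b₁, b₂, b₃, b₄, b₅, hb⟩ :=
    List.exists_sublist_of_five_le_length (l := s.toList) (by rwa [length_toList])
  have hmem : ∀ b ∈ [b₁, b₂, b₃, b₄, b₅], G.Adj v b ∧ b ∉ [u, v, a₁, a₂] := by
    intro b hb'
    have := mem_toList.mp (hb.subset hb')
    simp only [s, mem_sdiff, mem_neighborFinset, mem_insert, mem_singleton] at this
    simp only [List.mem_cons, List.not_mem_nil, or_false]
    exact ⟨this.1, by have := this.1.ne; tauto⟩
  refine ⟨u, v, a₁, a₂, b₁, b₂, b₃, b₄, b₅, ?_, huv, ha₁, ha₂,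
    (hmem b₁ (by simp)).1, (hmem b₂ (by simp)).1, (hmem b₃ (by simp)).1,
    (hmem b₄ (by simp)).1, (hmem b₅ (by simp)).1⟩
  have hu : [u, v, a₁, a₂].Nodup := by
    simp [huv.ne, ha₁.ne, ha₂.ne, hva₁, hva₂, ha]
  exact List.nodup_append.mpr ⟨hu, (s.nodup_toList).sublist hb,
    fun a ha b hb => by rintro rfl; exact (hmem a hb).2 ha⟩

theorem neighborFinset_subset_insert_neighborFinset_of_not_containsS25 [DecidableEq V] [Fintype V]
    [DecidableRel G.Adj] (hfree : ¬ContainsS25 G) {u v : V} (hvu : G.Adj v u)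
    (hv : 7 ≤ G.degree v) (hu : 3 ≤ G.degree u) :
    G.neighborFinset u ⊆ insert v (G.neighborFinset v) := by
  intro w huw
  by_contra hw
  simp only [mem_insert, mem_neighborFinset, not_or] at hw huw
  obtain ⟨hwv, hvw⟩ := hw
  obtain ⟨x, hx⟩ : (G.neighborFinset u \ {v, w}).Nonempty := by
    rw [← card_pos]
    have hdiff := le_card_sdiff {v, w} (G.neighborFinset u)
    have hpair := card_le_two (a := v) (b := w)
    rw [card_neighborFinset_eq_degree] at hdiff
    omega
  simp only [mem_sdiff, mem_neighborFinset, mem_insert, mem_singleton, not_or] at hx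
  obtain ⟨hux, hxv, hxw⟩ := hx
  refine hfree (containsS25_of_adj hvu.symm huw hux (Ne.symm hxw) (Ne.symm hwv) (Ne.symm hxv) ?_)
  -- `w` is not a neighbour of `v`, so removing it from `N(v)` costs nothing
  have hsub : G.neighborFinset v ∩ {u, w, x} ⊆ {u, x} := by
    intro y
    simp only [mem_inter, mem_neighborFinset, mem_insert, mem_singleton]
    rintro ⟨hvy, rfl | rfl | rfl⟩ <;> simp_all
  have hsplit := card_sdiff_add_card_inter (G.neighborFinset v) {u, w, x}
  have hinter := (card_le_card hsub).trans (card_le_two (a := u) (b := x))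
  rw [card_neighborFinset_eq_degree] at hsplit
  omega

end SimpleGraph

open SimpleGraph in
theorem stmt_3 {V : Type*} [Fintype V] [DecidableEq V] (G : SimpleGraph V)
    [DecidableRel G.Adj] (hconn : G.Connected) (hfree : ¬ ContainsS25 G)
    (hmin : ∀ w : V, 3 ≤ G.degree w) (v : V) (hdv : G.degree v = 7) :
    (insert v (G.neighborFinset v) : Finset V) = Finset.univ ∧ Fintype.card V = 8 := by
  have hclosed : insert v (G.neighborFinset v) = Finset.univ := by
    refine hconn.eq_univ_of_adj_mem (mem_insert_self v _) fun u w hu huw => ?_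
    rcases mem_insert.mp hu with rfl | hu
    · exact mem_insert_of_mem ((mem_neighborFinset _ _ _).mpr huw)
    · exact neighborFinset_subset_insert_neighborFinset_of_not_containsS25 hfree
        ((mem_neighborFinset _ _ _).mp hu) hdv.ge (hmin u) ((mem_neighborFinset _ _ _).mpr huw)
  refine ⟨hclosed, ?_⟩
  rw [← card_univ, ← hclosed, card_insert_of_notMem (G.notMem_neighborFinset_self v),
    card_neighborFinset_eq_degree, hdv]
end

section
/- Let G be a finite simple S_{2,5}-free graph and let uv be an edge of G with deg(u) = 6 and deg(v) = 6. Then u and v have at least 4 common neighbors, i.e., the edge uv lies in at least 4 triangles of G. -/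
theorem stmt_7 {V : Type*} [Fintype V] [DecidableEq V] (G : SimpleGraph V)
    [DecidableRel G.Adj] (hfree : ¬ ContainsS25 G) (u v : V) (huv : G.Adj u v)
    (hdu : G.degree u = 6) (hdv : G.degree v = 6) :
    4 ≤ (G.neighborFinset u ∩ G.neighborFinset v).card := by
  by_contra h
  push_neg at h
  apply hfree
  have hducard : (G.neighborFinset u).card = 6 := by
    rwa [G.card_neighborFinset_eq_degree]
  have hdvcard : (G.neighborFinset v).card = 6 := by
    rwa [G.card_neighborFinset_eq_degree]
  set A := G.neighborFinset u \ insert v (G.neighborFinset v) with hA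
  have hAcard : 2 ≤ A.card := by
    have hsub : G.neighborFinset u ∩ insert v (G.neighborFinset v) ⊆
        insert v (G.neighborFinset u ∩ G.neighborFinset v) := by
      intro x hx
      simp only [Finset.mem_inter, Finset.mem_insert] at hx ⊢
      tauto
    have h1 : (G.neighborFinset u ∩ insert v (G.neighborFinset v)).card ≤ 4 := by
      calc (G.neighborFinset u ∩ insert v (G.neighborFinset v)).card
          ≤ (insert v (G.neighborFinset u ∩ G.neighborFinset v)).card :=
            Finset.card_le_card hsub
        _ ≤ (G.neighborFinset u ∩ G.neighborFinset v).card + 1 :=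
            Finset.card_insert_le _ _
        _ ≤ 4 := by omega
    have h2 := Finset.card_sdiff_add_card_inter (G.neighborFinset u)
      (insert v (G.neighborFinset v))
    rw [← hA] at h2
    omega
  obtain ⟨a₁, ha₁, a₂, ha₂, hane⟩ := Finset.one_lt_card.mp (by omega : 1 < A.card)
  set B := G.neighborFinset v \ {u} with hB
  have hBcard : B.card = 5 := by
    rw [hB, Finset.card_sdiff_of_subset (by simpa using huv.symm)]
    simp [hdvcard]
  obtain ⟨l, hlen, hnd, hmem⟩ : ∃ l : List V, l.length = 5 ∧ l.Nodup ∧ ∀ x ∈ l, x ∈ B :=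
    ⟨B.toList, by simp [hBcard], B.nodup_toList, fun x hx => Finset.mem_toList.mp hx⟩
  rcases l with _|⟨b₁,_|⟨b₂,_|⟨b₃,_|⟨b₄,_|⟨b₅,_|⟨x,t⟩⟩⟩⟩⟩⟩ <;>
    simp only [List.length] at hlen <;> try omega
  have hAfact : ∀ a ∈ A, G.Adj u a ∧ a ≠ v ∧ ¬ G.Adj v a := by
    intro a ha
    rw [hA] at ha
    simp only [Finset.mem_sdiff, SimpleGraph.mem_neighborFinset, Finset.mem_insert,
      not_or] at ha
    tauto
  have hBfact : ∀ b ∈ B, G.Adj v b ∧ b ≠ u := by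
    intro b hb
    rw [hB] at hb
    simp only [Finset.mem_sdiff, SimpleGraph.mem_neighborFinset, Finset.mem_singleton] at hb
    tauto
  obtain ⟨hua₁, ha₁v, hva₁⟩ := hAfact a₁ ha₁
  obtain ⟨hua₂, ha₂v, hva₂⟩ := hAfact a₂ ha₂
  obtain ⟨hvb₁, hb₁u⟩ := hBfact b₁ (hmem _ (by simp))
  obtain ⟨hvb₂, hb₂u⟩ := hBfact b₂ (hmem _ (by simp))
  obtain ⟨hvb₃, hb₃u⟩ := hBfact b₃ (hmem _ (by simp))
  obtain ⟨hvb₄, hb₄u⟩ := hBfact b₄ (hmem _ (by simp))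
  obtain ⟨hvb₅, hb₅u⟩ := hBfact b₅ (hmem _ (by simp))
  refine ⟨u, v, a₁, a₂, b₁, b₂, b₃, b₄, b₅, ?_, huv, hua₁, hua₂,
    hvb₁, hvb₂, hvb₃, hvb₄, hvb₅⟩
  simp only [List.nodup_cons, List.mem_cons, List.not_mem_nil, or_false, not_or] at hnd ⊢
  refine ⟨⟨huv.ne, hua₁.ne, hua₂.ne, fun e => hb₁u e.symm, fun e => hb₂u e.symm,
    fun e => hb₃u e.symm, fun e => hb₄u e.symm, fun e => hb₅u e.symm⟩,
    ⟨fun e => ha₁v e.symm, fun e => ha₂v e.symm, hvb₁.ne, hvb₂.ne, hvb₃.ne, hvb₄.ne, hvb₅.ne⟩,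
    ⟨hane, fun e => hva₁ (e ▸ hvb₁), fun e => hva₁ (e ▸ hvb₂), fun e => hva₁ (e ▸ hvb₃),
      fun e => hva₁ (e ▸ hvb₄), fun e => hva₁ (e ▸ hvb₅)⟩,
    ⟨fun e => hva₂ (e ▸ hvb₁), fun e => hva₂ (e ▸ hvb₂), fun e => hva₂ (e ▸ hvb₃),
      fun e => hva₂ (e ▸ hvb₄), fun e => hva₂ (e ▸ hvb₅)⟩,
    ?_, ?_, ?_, ?_, by simp⟩ <;> tauto
end
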